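/- On U = {(u,v,r,θ) ∈ ℝ⁴ : r ≠ 0}, let X₁ = (0,0, −cos θ, sin θ/r), X₂ = (0,0, sin θ, cos θ/r), X₃ = (0,0,0,1) be the E(2) symmetry vector fields, and define the functions f_I^î : U → ℝ (I, î ∈ {1,2,3}) with the only nonzero components f₁^3 = sin θ / r and f₂^3 = cos θ / r. Let C^k̂_{îĵ} be the structure constants of the isotropy algebra ([λ₁,λ₂] = 0, [λ₁,λ₃] = −λ₂, [λ₂,λ₃] = λ₁, extended antisymmetrically in the lower indices) and C^K_{IJ} the structure constants of the symmetry algebra ([X₁,X₂] = 0, [X₁,X₃] = −X₂, [X₂,X₃] = X₁, extended antisymmetrically). Then for all I, J, k̂ and all x ∈ U: X_I(f_J^k̂)(x) − X_J(f_I^k̂)(x) − Σ_{î,ĵ} f_I^î(x) f_J^ĵ(x) C^k̂_{îĵ} = Σ_K C^K_{IJ} f_K^k̂(x), where X(f) denotes the directional derivative of f along the vector field X. -/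

import Mathlib

open Finset

/- Coordinates are `(u, v, r, θ) = (x 0, x 1, x 2, x 3)`. -/

/-- The E(2) symmetry vector fields X₁, X₂, X₃. -/
noncomputable def XE2 : Fin 3 → (Fin 4 → ℝ) → (Fin 4 → ℝ) :=
  ![fun x => ![0, 0, -Real.cos (x 3), Real.sin (x 3) / x 2],
    fun x => ![0, 0, Real.sin (x 3), Real.cos (x 3) / x 2],
    fun _ => ![0, 0, 0, 1]]

/-- The functions `f I î`; the only nonzero components are
`f₁³ = sin θ / r` and `f₂³ = cos θ / r`. -/
noncomputable def fE2 : Fin 3 → Fin 3 → (Fin 4 → ℝ) → ℝ :=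
  ![![fun _ => 0, fun _ => 0, fun x => Real.sin (x 3) / x 2],
    ![fun _ => 0, fun _ => 0, fun x => Real.cos (x 3) / x 2],
    ![fun _ => 0, fun _ => 0, fun _ => 0]]

/-- The structure constants of e(2): `[λ₁,λ₂] = 0`, `[λ₁,λ₃] = −λ₂`,
`[λ₂,λ₃] = λ₁`, extended antisymmetrically; `CE2 k i j` is `C^k_{ij}`.
These are also the structure constants of the symmetry algebra. -/
def CE2 : Fin 3 → Fin 3 → Fin 3 → ℝ :=
  ![![![0, 0, 0], ![0, 0, 1], ![0, -1, 0]],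
    ![![0, 0, -1], ![0, 0, 0], ![1, 0, 0]],
    ![![0, 0, 0], ![0, 0, 0], ![0, 0, 0]]]

/-! Only the `k̂ = 3` components are nonzero, and the quadratic term always vanishes because
`f_I^î` is supported on `î = 3` while `C^k̂_{33} = 0`. What remains is a first-order identity
between the derivatives of `sin θ / r` and `cos θ / r` along the `X_I`, checked case by case
from the quotient rule. -/

section QuotientOfCoordinates

variable {ι : Type*} [Fintype ι] {g : ℝ → ℝ} {g' : ℝ} {a b : ι} {x : ι → ℝ}

theorem hasFDerivAt_comp_apply_div_apply (hg : HasDerivAt g g' (x a)) (hx : x b ≠ 0) :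
    HasFDerivAt (fun y : ι → ℝ => g (y a) / y b)
      ((g' / x b) • (ContinuousLinearMap.proj a : (ι → ℝ) →L[ℝ] ℝ)
        - (g (x a) / x b ^ 2) • (ContinuousLinearMap.proj b : (ι → ℝ) →L[ℝ] ℝ)) x := by
  have hnum := hg.comp_hasFDerivAt x (ContinuousLinearMap.proj a : (ι → ℝ) →L[ℝ] ℝ).hasFDerivAt
  have hinv := (hasDerivAt_inv hx).comp_hasFDerivAt x
    (ContinuousLinearMap.proj b : (ι → ℝ) →L[ℝ] ℝ).hasFDerivAt
  have hquot : (fun y : ι → ℝ => g (y a) / y b) = fun y =>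
      (g ∘ (ContinuousLinearMap.proj a : (ι → ℝ) →L[ℝ] ℝ)) y
        * ((·⁻¹) ∘ (ContinuousLinearMap.proj b : (ι → ℝ) →L[ℝ] ℝ)) y := by
    simp only [Function.comp_apply, ContinuousLinearMap.proj_apply, div_eq_mul_inv]
  rw [hquot]
  refine (hnum.mul hinv).congr_fderiv ?_
  ext v
  simp only [Function.comp_apply, ContinuousLinearMap.proj_apply, neg_smul, smul_neg, add_apply,
    neg_apply, smul_apply, smul_eq_mul, sub_apply]
  field_simp
  ring

theorem fderiv_comp_apply_div_apply (hg : HasDerivAt g g' (x a)) (hx : x b ≠ 0) (v : ι → ℝ) :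
    fderiv ℝ (fun y : ι → ℝ => g (y a) / y b) x v = g' * v a / x b - g (x a) * v b / x b ^ 2 := by
  rw [(hasFDerivAt_comp_apply_div_apply hg hx).fderiv]
  simp only [sub_apply, smul_apply, ContinuousLinearMap.proj_apply, smul_eq_mul]
  ring

end QuotientOfCoordinates

theorem stmt_16 (I J k : Fin 3) (x : Fin 4 → ℝ) (hx : x 2 ≠ 0) :
    fderiv ℝ (fE2 J k) x (XE2 I x) - fderiv ℝ (fE2 I k) x (XE2 J x)
      - ∑ i, ∑ j, fE2 I i x * fE2 J j x * CE2 k i j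
    = ∑ K, CE2 K I J * fE2 K k x := by
  have hsin := fderiv_comp_apply_div_apply (Real.hasDerivAt_sin (x 3)) hx
  have hcos := fderiv_comp_apply_div_apply (Real.hasDerivAt_cos (x 3)) hx
  fin_cases I <;> fin_cases J <;> fin_cases k <;>
    simp [XE2, fE2, CE2, Fin.sum_univ_three, hsin, hcos] <;>
    ring
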